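/- arXiv:math/0702678 — 8 statements merged into one kernel-verified Lean document; each statement's English description precedes it below -/
import Mathlib

section
/- Let GL(n,ℤ) → GL(n,ℤ/2) be the map induced by reduction mod 2. This map is surjective. -/
/-!
Over a field every invertible matrix is a product of transvections and an invertible diagonal
matrix. Transvections lift to transvections over `ℤ`, which are invertible, and the only
invertible diagonal matrix over `ℤ/2` is the identity.
-/

open Matrix

theorem RingHom.surjective_of_surjective_unitsMap {R K : Type*} [Semiring R] [DivisionRing K]
    (f : R →+* K) (hf : Function.Surjective (Units.map (f : R →* K))) :
    Function.Surjective f := by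
  intro x
  rcases eq_or_ne x 0 with rfl | hx
  · exact ⟨0, map_zero f⟩
  · obtain ⟨v, hv⟩ := hf (Units.mk0 x hx)
    exact ⟨v, congrArg Units.val hv⟩

section

variable {n : Type*} [Fintype n] [DecidableEq n]

theorem Matrix.isUnit_transvection {R : Type*} [CommRing R] {i j : n} (hij : i ≠ j) (c : R) :
    IsUnit (transvection i j c) :=
  (isUnit_iff_isUnit_det _).mpr (by simp [hij])

theorem RingHom.mapMatrix_transvection {R S : Type*} [CommRing R] [CommRing S] (f : R →+* S)
    (i j : n) (c : R) : f.mapMatrix (transvection i j c) = transvection i j (f c) := by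
  ext a b
  simp [transvection, single, one_apply, apply_ite f]

theorem RingHom.surjective_unitsMap_mapMatrix {R K : Type*} [CommRing R] [Field K]
    (f : R →+* K) (hf : Function.Surjective (Units.map (f : R →* K))) :
    Function.Surjective
      (Units.map ((f.mapMatrix : Matrix n n R →+* Matrix n n K).toMonoidHom)) := by
  suffices h : ∀ N : Matrix n n K, N.det ≠ 0 → ∃ M : (Matrix n n R)ˣ, f.mapMatrix M = N from
    fun u => (h u (isUnits_det_units u).ne_zero).imp fun _ hM => Units.ext hM
  intro N hN
  refine diagonal_transvection_induction_of_det_ne_zero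
    (fun N => ∃ M : (Matrix n n R)ˣ, f.mapMatrix M = N) N hN ?diag ?transvec ?mul
  case diag =>
    intro D hD
    have hD0 : ∀ i, D i ≠ 0 := by simpa [Finset.prod_ne_zero_iff] using hD
    choose v hv using fun i => hf (Units.mk0 (D i) (hD0 i))
    obtain ⟨M, hM⟩ := isUnit_diagonal.mpr (Pi.isUnit_iff.mpr fun i => (v i).isUnit)
    refine ⟨M, ?_⟩
    rw [hM, RingHom.mapMatrix_apply, diagonal_map (map_zero f)]
    exact congrArg diagonal (funext fun i => congrArg Units.val (hv i))
  case transvec =>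
    intro t
    obtain ⟨c, hc⟩ := f.surjective_of_surjective_unitsMap hf t.c
    obtain ⟨M, hM⟩ := isUnit_transvection t.hij c
    exact ⟨M, by rw [hM, f.mapMatrix_transvection, hc]; rfl⟩
  case mul =>
    rintro A B - - ⟨M, rfl⟩ ⟨N, rfl⟩
    exact ⟨M * N, by rw [Units.val_mul, map_mul]⟩

end

/-- The reduction-mod-2 map `GL(n, ℤ) → GL(n, ℤ/2)` is surjective. -/
theorem stmt_0 (n : ℕ) :
    Function.Surjective
      (Units.map (((Int.castRingHom (ZMod 2)).mapMatrix :
          Matrix (Fin n) (Fin n) ℤ →+* Matrix (Fin n) (Fin n) (ZMod 2)).toMonoidHom)) :=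
  (Int.castRingHom (ZMod 2)).surjective_unitsMap_mapMatrix fun _ => ⟨1, Subsingleton.elim _ _⟩
end

section
/- Let Λ be a free abelian group of finite rank, let the ℤ/2-vector space V = Λ/2Λ be written as a direct sum V = V₁ ⊕ ⋯ ⊕ V_k of subgroups. Then there exist subgroups Λ₁, …, Λ_k of Λ such that Λ = Λ₁ ⊕ ⋯ ⊕ Λ_k and the image of Λᵢ in Λ/2Λ equals Vᵢ for each i. -/
/-!
Write `p : Λ → Λ/2Λ`. It suffices to split off one summand at a time: if `p(N) = U₁ ⊕ U₂` then
`N = A ⊕ B` with `p(A) = U₁` and `p(B) = U₂`. Take a Smith basis of `N` adapted to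
`W = N ∩ p⁻¹(U₂)`. Since `2N ≤ W`, every elementary divisor divides `2`, so `W` is spanned by the
basis vectors lying in `W` together with vectors of `2N`, which `p` kills; `B` is the span of those
basis vectors. The other basis vectors span a complement `F` of `B`; shearing `F` by a linear map
into `B` that corrects the `U₂`-components of `p` gives a complement `A` with `p(A) ≤ U₁`, and the
modular law forces `p(A) = U₁`.
-/

open Submodule

section CompleteLattice

variable {α : Type*} [CompleteLattice α]

theorem iSup_fin_cons {k : ℕ} (a : α) (g : Fin k → α) :
    ⨆ i, (Fin.cons a g : Fin (k + 1) → α) i = a ⊔ ⨆ i, g i := by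
  simp [← Finset.sup_univ_eq_iSup, Fin.univ_succ, Finset.sup_map, Function.comp_def]

theorem iSupIndep_fin_cons_iff [IsModularLattice α] {k : ℕ} {a : α} {g : Fin k → α} :
    iSupIndep (Fin.cons a g : Fin (k + 1) → α) ↔ Disjoint a (⨆ i, g i) ∧ iSupIndep g := by
  refine ⟨fun h => ⟨?_, h.comp (Fin.succ_injective k)⟩, fun ⟨ha, hg⟩ => ?_⟩
  · have := h.disjoint_biSup (x := 0) (y := Set.range Fin.succ) (by simp)
    simpa only [iSup_range, Fin.cons_zero, Fin.cons_succ] using this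
  · rw [iSupIndep_iff_supIndep_univ, Fin.univ_succ, Finset.cons_eq_insert]
    rw [iSupIndep_iff_supIndep_univ] at hg
    refine Finset.SupIndep.insert ?_ ?_
    · rw [Finset.supIndep_map]
      simpa [Function.comp_def] using hg
    · simpa [Finset.sup_map, Function.comp_def, Finset.sup_univ_eq_iSup] using ha

end CompleteLattice

theorem Submodule.isCompl_map_id_sub {R M : Type*} [Ring R] [AddCommGroup M] [Module R M]
    {F B : Submodule R M} (h : IsCompl F B) {φ : M →ₗ[R] M} (hφ : LinearMap.range φ ≤ B) :
    IsCompl (F.map (LinearMap.id - φ)) B := by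
  have hφB (x : M) : φ x ∈ B := hφ (LinearMap.mem_range_self φ x)
  constructor
  · rw [disjoint_def]
    rintro _ ⟨y, hyF, rfl⟩ hyB
    have hy : y ∈ B := by simpa using add_mem hyB (hφB y)
    simp [disjoint_def.mp h.disjoint y hyF hy]
  · rw [codisjoint_iff, eq_top_iff, ← h.sup_eq_top]
    refine sup_le (fun y hy => ?_) le_sup_right
    rw [show y = (LinearMap.id - φ : M →ₗ[R] M) y + φ y by simp]
    exact add_mem (mem_sup_left (mem_map_of_mem hy)) (mem_sup_right (hφB y))

section CommRing

variable {R M Q : Type*} [CommRing R] [AddCommGroup M] [Module R M] [AddCommGroup Q] [Module R Q]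

theorem Module.Basis.SmithNormalForm.a_dvd_of_forall_smul_mem {ι : Type*} {n : ℕ}
    {N : Submodule R M} (snf : Basis.SmithNormalForm N ι n) {ϖ : R} (hN : ∀ x, ϖ • x ∈ N)
    (i : Fin n) : snf.a i ∣ ϖ := by
  have := snf.repr_apply_embedding_eq_repr_smul ⟨ϖ • snf.bM (snf.f i), hN _⟩ (i := i)
  simp only [map_smul, Finsupp.smul_apply, smul_eq_mul, Module.Basis.repr_self,
    Finsupp.single_eq_same, mul_one] at this
  exact ⟨_, this⟩

theorem Module.Free.subsingleton_of_range_lsmul_eq_top [Module.Free R M] {ϖ : R} (hϖ : ¬IsUnit ϖ)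
    (h : LinearMap.range (LinearMap.lsmul R M ϖ) = ⊤) : Subsingleton M := by
  let b := Module.Free.chooseBasis R M
  have : IsEmpty (Module.Free.ChooseBasisIndex R M) := by
    refine ⟨fun i => hϖ ?_⟩
    obtain ⟨y, hy⟩ : b i ∈ LinearMap.range (LinearMap.lsmul R M ϖ) := h ▸ mem_top
    have := congr_arg (fun x => b.repr x i) hy
    simp only [LinearMap.lsmul_apply, map_smul, Finsupp.coe_smul, Pi.smul_apply, smul_eq_mul,
      Module.Basis.repr_self, Finsupp.single_eq_same] at this
    exact IsUnit.of_mul_eq_one _ this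
  exact b.repr.toEquiv.subsingleton

theorem exists_isCompl_map_le [Module.Free R M] {F B : Submodule R M} (hFB : IsCompl F B)
    {f : M →ₗ[R] Q} {U : Submodule R Q} (hU : LinearMap.range f ≤ U ⊔ B.map f) :
    ∃ A : Submodule R M, IsCompl A B ∧ A.map f ≤ U := by
  have hlift (x : M) : ∃ y ∈ B, f (x - y) ∈ U := by
    obtain ⟨u, hu, _, ⟨y, hy, rfl⟩, hxy⟩ := mem_sup.mp (hU (LinearMap.mem_range_self f x))
    exact ⟨y, hy, by rwa [map_sub, ← hxy, add_sub_cancel_right]⟩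
  choose w hwB hwU using hlift
  let b := Module.Free.chooseBasis R M
  let φ : M →ₗ[R] M := b.constr R fun j => w (b j)
  have hφ : LinearMap.range φ ≤ B := by
    rw [b.constr_range, span_le]
    rintro _ ⟨j, rfl⟩
    exact hwB _
  have hfφ : LinearMap.range (f ∘ₗ (LinearMap.id - φ)) ≤ U := by
    rw [← b.constr_self R (f ∘ₗ (LinearMap.id - φ)), b.constr_range, span_le]
    rintro _ ⟨j, rfl⟩
    simpa [φ] using hwU (b j)
  refine ⟨F.map (LinearMap.id - φ), isCompl_map_id_sub hFB hφ, ?_⟩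
  rintro _ ⟨_, ⟨x, -, rfl⟩, rfl⟩
  exact hfφ (LinearMap.mem_range_self _ x)

end CommRing

section PID

variable {R M Q : Type*} [CommRing R] [IsDomain R] [IsPrincipalIdealRing R]
  [AddCommGroup M] [Module R M] [Module.Free R M] [Module.Finite R M]
  [AddCommGroup Q] [Module R Q] {ϖ : R} {f : M →ₗ[R] Q}

theorem exists_isCompl_map_eq_of_le_range (hϖ : Irreducible ϖ) (hf : ∀ x, f (ϖ • x) = 0)
    {U : Submodule R Q} (hU : U ≤ LinearMap.range f) :
    ∃ F B : Submodule R M, IsCompl F B ∧ B.map f = U := by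
  set W := U.comap f
  have hW (x : M) : ϖ • x ∈ W := by simp [W, hf]
  obtain ⟨n, snf⟩ := W.smithNormalForm (Module.Free.chooseBasis R M)
  set b := snf.bM
  set S := {j | b j ∈ W}
  have hBW : span R (b '' S) ≤ W := span_le.mpr (by rintro _ ⟨j, hj, rfl⟩; exact hj)
  have hWB : W.map f ≤ (span R (b '' S)).map f := by
    have hWspan : W = span R (Set.range fun i => (snf.bN i : M)) := by
      rw [show (fun i => (snf.bN i : M)) = W.subtype ∘ snf.bN from rfl, Set.range_comp,
        ← map_span, snf.bN.span_eq, map_subtype_top]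
    rw [hWspan, map_span, span_le]
    rintro _ ⟨_, ⟨i, rfl⟩, rfl⟩
    show f (snf.bN i : M) ∈ _
    rw [snf.snf]
    rcases hϖ.dvd_iff.mp (snf.a_dvd_of_forall_smul_mem hW i) with ⟨u, hu⟩ | ⟨u, hu⟩
    · have hbi : b (snf.f i) ∈ W := by
        have := W.smul_mem (↑u⁻¹ : R) (snf.bN i).2
        rwa [snf.snf, ← hu, smul_smul, Units.inv_mul, one_smul] at this
      rw [map_smul]
      exact smul_mem _ _ (mem_map_of_mem (subset_span ⟨_, hbi, rfl⟩))
    · rw [← hu, mul_smul, hf]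
      exact zero_mem _
  refine ⟨span R (b '' Sᶜ), span R (b '' S),
    b.linearIndependent.isCompl_span_image b.span_eq isCompl_compl.symm, ?_⟩
  exact le_antisymm (map_le_iff_le_comap.mpr hBW) (map_comap_eq_of_le hU ▸ hWB)

theorem exists_isCompl_map_eq (hϖ : Irreducible ϖ) (hf : ∀ x, f (ϖ • x) = 0)
    {U₁ U₂ : Submodule R Q} (hsup : U₁ ⊔ U₂ = LinearMap.range f) (hdisj : Disjoint U₁ U₂) :
    ∃ A B : Submodule R M, IsCompl A B ∧ A.map f = U₁ ∧ B.map f = U₂ := by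
  obtain ⟨F, B, hFB, hB⟩ := exists_isCompl_map_eq_of_le_range hϖ hf (hsup ▸ le_sup_right)
  obtain ⟨A, hAB, hA⟩ := exists_isCompl_map_le hFB (f := f) (U := U₁) (by rw [hB, hsup])
  refine ⟨A, B, hAB, eq_of_le_of_inf_le_of_sup_le (z := U₂) hA
    (by rw [hdisj.eq_bot]; exact bot_le) ?_, hB⟩
  rw [hsup, ← hB, ← Submodule.map_sup, hAB.sup_eq_top, Submodule.map_top]

theorem exists_iSupIndep_map_eq (hϖ : Irreducible ϖ) (hf : ∀ x, f (ϖ • x) = 0) {k : ℕ}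
    (N : Submodule R M) (V : Fin (k + 1) → Submodule R Q) (hV : iSupIndep V)
    (hN : ⨆ i, V i = N.map f) :
    ∃ L : Fin (k + 1) → Submodule R M, iSupIndep L ∧ ⨆ i, L i = N ∧ ∀ i, (L i).map f = V i := by
  induction k generalizing N with
  | zero =>
    let : Unique (Fin (0 + 1)) := Fin.instUnique
    refine ⟨fun _ => N, iSupIndep_subsingleton _, iSup_const, fun i => ?_⟩
    rw [Subsingleton.elim i default, ← hN, iSup_unique]
  | succ k ih =>
    rw [← Fin.cons_self_tail V, iSupIndep_fin_cons_iff] at hV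
    rw [← Fin.cons_self_tail V, iSup_fin_cons] at hN
    obtain ⟨A, B, hAB, hA, hB⟩ := exists_isCompl_map_eq (f := f ∘ₗ N.subtype) hϖ
      (fun x => hf x) (by rw [hN, LinearMap.range_comp, range_subtype]) hV.1
    obtain ⟨L, hL, hLB, hLV⟩ :=
      ih (B.map N.subtype) (V := Fin.tail V) hV.2 (by rw [← hB, map_comp])
    refine ⟨Fin.cons (A.map N.subtype) L, ?_, ?_, ?_⟩
    · rw [iSupIndep_fin_cons_iff, hLB]
      exact ⟨disjoint_map N.injective_subtype hAB.disjoint, hL⟩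
    · rw [iSup_fin_cons, hLB, ← Submodule.map_sup, hAB.sup_eq_top, map_subtype_top]
    · intro i
      induction i using Fin.cases with
      | zero => rw [Fin.cons_zero, ← map_comp, hA]
      | succ i => rw [Fin.cons_succ, hLV]; rfl

end PID

/-- If `Λ` is a free abelian group of finite rank and the `ℤ/2`-vector space
`Λ/2Λ` is the internal direct sum of subgroups `V₁, …, V_k`, then there are subgroups
`Λ₁, …, Λ_k` of `Λ` with `Λ = Λ₁ ⊕ ⋯ ⊕ Λ_k` and the image of `Λᵢ` in `Λ/2Λ` equal to `Vᵢ`. -/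
theorem stmt_1 (Λ : Type*) [AddCommGroup Λ] [Module.Free ℤ Λ] [Module.Finite ℤ Λ]
    (k : ℕ)
    (V : Fin k → Submodule ℤ (Λ ⧸ LinearMap.range (LinearMap.lsmul ℤ Λ 2)))
    (hV : DirectSum.IsInternal V) :
    ∃ L : Fin k → Submodule ℤ Λ, DirectSum.IsInternal L ∧
      ∀ i, (L i).map (LinearMap.range (LinearMap.lsmul ℤ Λ 2)).mkQ = V i := by
  simp only [DirectSum.isInternal_submodule_iff_iSupIndep_and_iSup_eq_top] at hV ⊢
  obtain ⟨hind, htop⟩ := hV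
  cases k with
  | zero =>
    have : Subsingleton Λ :=
      Module.Free.subsingleton_of_range_lsmul_eq_top Int.prime_two.not_isUnit <| by
        simpa using congr_arg (comap (mkQ _)) ((iSup_of_empty V).symm.trans htop)
    exact ⟨fun i => i.elim0, ⟨iSupIndep_subsingleton _, Subsingleton.elim _ _⟩, fun i => i.elim0⟩
  | succ k =>
    obtain ⟨L, hL, hLtop, hLV⟩ := exists_iSupIndep_map_eq (f := mkQ _) Int.prime_two.irreducible
      (fun x => (Quotient.mk_eq_zero _).mpr (LinearMap.mem_range_self (LinearMap.lsmul ℤ Λ 2) x))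
      ⊤ V hind (by rw [htop, Submodule.map_top, range_mkQ])
    exact ⟨L, ⟨hL, hLtop⟩, hLV⟩
end

section
/- Let A be a structurable algebra over a field of characteristic ≠ 2,3 satisfying (r²,x,y) = (r,rx,y) + r(r,x,y) for all skew r and all x,y ∈ A. Then for skew elements r, s: (r², s, x) = 2r(r,s,x) + (r, [r,s], x) for all x ∈ A. -/
/-- The associator `(x,y,z) = (xy)z - x(yz)`. -/
def stmt8Assoc {A : Type*} [NonAssocRing A] (x y z : A) : A := (x * y) * z - x * (y * z)

/-- In a structurable algebra over a field of characteristic `≠ 2, 3` (skew-alternative,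
satisfying `r(s,r,x) + (r,sr,x) = 0` for skew `r, s` and
`(r²,x,y) = (r,rx,y) + r(r,x,y)` for skew `r`), one has
`(r²,s,x) = 2r(r,s,x) + (r,[r,s],x)` for skew `r, s` and all `x`. -/
theorem stmt_8 (F A : Type*) [Field F] [NonAssocRing A] [Module F A]
    [SMulCommClass F A A] [IsScalarTower F A A] [StarRing A]
    (hstarlin : ∀ (c : F) (a : A), star (c • a) = c • star a)
    (h2 : (2 : F) ≠ 0) (h3 : (3 : F) ≠ 0)
    (hsa : ∀ s x y : A, star s = -s →
      stmt8Assoc s x y = -stmt8Assoc x s y ∧ stmt8Assoc s x y = stmt8Assoc x y s)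
    (ha : ∀ r s x : A, star r = -r → star s = -s →
      r * stmt8Assoc s r x + stmt8Assoc r (s * r) x = 0)
    (hb : ∀ r x y : A, star r = -r →
      stmt8Assoc (r * r) x y = stmt8Assoc r (r * x) y + r * stmt8Assoc r x y)
    (r s x : A) (hr : star r = -r) (hs : star s = -s) :
    stmt8Assoc (r * r) s x =
      2 • (r * stmt8Assoc r s x) + stmt8Assoc r (r * s - s * r) x := by
  have key : r * stmt8Assoc r s x = stmt8Assoc r (s * r) x := by
    have h2' := ha r s x hr hs
    rw [(hsa s r x hs).1, mul_neg] at h2'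
    exact neg_add_eq_zero.mp h2'
  have hsub : stmt8Assoc r (r * s - s * r) x =
      stmt8Assoc r (r * s) x - stmt8Assoc r (s * r) x := by
    simp only [stmt8Assoc, mul_sub, sub_mul]
    abel
  rw [hb r s x hr, hsub, ← key, two_smul]
  abel
end

section
/- Let A be a finely Λ-graded algebra with involution over a field F such that supp(A) = Λ, every product of nonzero homogeneous elements is nonzero, and each homogeneous component is one-dimensional. Suppose Λ = Λ' ⊕ Λ'' with [A^{Λ'}, A^{Λ''}] = 0 and (A^{Λ'}, A^{Λ''}, A) = (A, A^{Λ'}, A^{Λ''}) = 0. Then the map x ⊗ y ↦ xy is a graded isomorphism of algebras with involution from A^{Λ'} ⊗_F A^{Λ''} onto A. -/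
/-!
Choose a nonzero `e l` in every (one-dimensional) component `A^l`. The `e l` with `l ∈ Λ'` form a
basis of `A^{Λ'}`, and likewise for `Λ''`, so the `e l' ⊗ e l''` form a basis of the tensor
product. Multiplication sends `e l' ⊗ e l''` to `e l' * e l''`, a nonzero element of `A^{l' + l''}`;
as `(l', l'') ↦ l' + l''` is a bijection `Λ' × Λ'' → Λ`, these images form a basis of `A` again.
Multiplicativity and compatibility with the involution are rearrangements using the commutation
and associativity hypotheses.
-/

open Module Submodule

section BiSup

variable {R A Λ S : Type*} [Semiring R] [SetLike S Λ]

section AddCommMonoid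

variable [AddCommMonoid A] [Module R A] {𝒜 : Λ → Submodule R A} {s : S}

theorem Submodule.mem_biSup_of_mem {l : Λ} {x : A} (hl : l ∈ s) (hx : x ∈ 𝒜 l) :
    x ∈ ⨆ l ∈ s, 𝒜 l :=
  mem_iSup_of_mem l (mem_iSup_of_mem hl hx)

@[elab_as_elim]
theorem Submodule.biSup_induction {motive : ∀ x, x ∈ ⨆ l ∈ s, 𝒜 l → Prop}
    (mem : ∀ l (hl : l ∈ s) x (hx : x ∈ 𝒜 l), motive x (mem_biSup_of_mem hl hx))
    (zero : motive 0 (zero_mem _))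
    (add : ∀ x y hx hy, motive x hx → motive y hy → motive (x + y) (add_mem hx hy))
    {x : A} (hx : x ∈ ⨆ l ∈ s, 𝒜 l) : motive x hx := by
  have hx' : x ∈ ⨆ l : s, 𝒜 l := by rwa [iSup_subtype'] at hx
  obtain ⟨_, h⟩ := iSup_induction (motive := fun x => ∃ hx, motive x hx) _ hx'
    (fun l x hx => ⟨_, mem l l.2 x hx⟩) ⟨_, zero⟩
    fun _ _ ⟨_, hx⟩ ⟨_, hy⟩ => ⟨_, add _ _ _ _ hx hy⟩
  exact h

theorem star_mem_biSup [StarAddMonoid A] (hstar : ∀ {l : Λ} {x : A}, x ∈ 𝒜 l → star x ∈ 𝒜 l)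
    {x : A} (hx : x ∈ ⨆ l ∈ s, 𝒜 l) : star x ∈ ⨆ l ∈ s, 𝒜 l := by
  induction hx using biSup_induction with
  | mem l hl x hx => exact mem_biSup_of_mem hl (hstar hx)
  | zero => simp
  | add x y _ _ hx hy => simpa using add_mem hx hy

end AddCommMonoid

theorem mul_mem_biSup [AddZeroClass Λ] [AddMemClass S Λ] [NonUnitalNonAssocSemiring A]
    [Module R A] {𝒜 : Λ → Submodule R A}
    (hmul : ∀ {l m : Λ} {x y : A}, x ∈ 𝒜 l → y ∈ 𝒜 m → x * y ∈ 𝒜 (l + m))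
    {s : S} {x y : A} (hx : x ∈ ⨆ l ∈ s, 𝒜 l) (hy : y ∈ ⨆ l ∈ s, 𝒜 l) :
    x * y ∈ ⨆ l ∈ s, 𝒜 l := by
  induction hx using biSup_induction with
  | mem l hl x hx =>
    induction hy using biSup_induction with
    | mem m hm y hy => exact mem_biSup_of_mem (add_mem hl hm) (hmul hx hy)
    | zero => simp
    | add y z _ _ hy hz => simpa [mul_add] using add_mem hy hz
  | zero => simp
  | add x z _ _ hx hz => simpa [add_mul] using add_mem hx hz

end BiSup

section FinrankOne

variable {F A Λ ι S : Type*} [Field F] [AddCommGroup A] [Module F A] {𝒜 : Λ → Submodule F A}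
  (hfine : ∀ l, finrank F (𝒜 l) = 1)

include hfine in
theorem exists_mem_ne_zero_of_finrank_eq_one :
    ∃ e : Λ → A, (∀ l, e l ∈ 𝒜 l) ∧ ∀ l, e l ≠ 0 := by
  choose e he he0 using fun l => exists_mem_ne_zero_of_ne_bot (p := 𝒜 l) fun h => by
    have := hfine l
    rw [h, finrank_bot] at this
    exact zero_ne_one this
  exact ⟨e, he, he0⟩

include hfine in
theorem span_range_eq_iSup_of_finrank_eq_one {g : ι → Λ} {w : ι → A}
    (hw : ∀ i, w i ∈ 𝒜 (g i)) (hw0 : ∀ i, w i ≠ 0) :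
    span F (Set.range w) = ⨆ i, 𝒜 (g i) := by
  rw [span_range_eq_iSup]
  exact iSup_congr fun i =>
    (eq_span_singleton_of_mem_of_finrank_eq_one (hfine _) (hw i) (hw0 i)).symm

variable [SetLike S Λ] (hind : iSupIndep 𝒜) {e : Λ → A} (he : ∀ l, e l ∈ 𝒜 l)
  (he0 : ∀ l, e l ≠ 0)

noncomputable def basisBiSupOfFinrankEqOne (s : S) : Basis s F ↥(⨆ l ∈ s, 𝒜 l) :=
  (Basis.span ((hind.comp Subtype.val_injective).linearIndependent (v := fun l : s => e l) _
    (fun l => he l) fun l => he0 l)).map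
    (LinearEquiv.ofEq _ _ (by
      rw [span_range_eq_iSup_of_finrank_eq_one hfine (fun l : s => he l) fun l => he0 l,
        iSup_subtype]))

@[simp]
theorem coe_basisBiSupOfFinrankEqOne (s : S) (l : s) :
    (basisBiSupOfFinrankEqOne hfine hind he he0 s l : A) = e l := by
  simp [basisBiSupOfFinrankEqOne]

end FinrankOne

theorem AddSubgroup.bijective_add_of_isCompl {G : Type*} [AddCommGroup G] {H K : AddSubgroup G}
    (h : IsCompl H K) : Function.Bijective fun g : H × K => (g.1 : G) + g.2 := by
  refine ⟨add_injective_of_disjoint h.disjoint, fun g => ?_⟩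
  obtain ⟨x, hx, y, hy, rfl⟩ := mem_sup.mp (h.sup_eq_top ▸ mem_top g)
  exact ⟨(⟨x, hx⟩, ⟨y, hy⟩), rfl⟩

theorem Module.Basis.bijective_of_linearIndependent_of_span_eq_top {ι R M N : Type*}
    [Semiring R] [AddCommMonoid M] [Module R M] [AddCommMonoid N] [Module R N]
    (b : Basis ι R M) {f : M →ₗ[R] N} (hli : LinearIndependent R (f ∘ b))
    (hsp : span R (Set.range (f ∘ b)) = ⊤) : Function.Bijective f := by
  have : f = (b.equiv (Basis.mk hli hsp.ge) (Equiv.refl ι)).toLinearMap :=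
    b.ext fun i => by simp
  rw [this]
  exact LinearEquiv.bijective _

theorem bijective_lift_mul_of_isCompl {F Λ A : Type*} [Field F] [AddCommGroup Λ]
    [NonAssocRing A] [Module F A] [SMulCommClass F A A] [IsScalarTower F A A]
    {𝒜 : Λ → Submodule F A} (hind : iSupIndep 𝒜) (htop : ⨆ l, 𝒜 l = ⊤)
    (hmul : ∀ {l m : Λ} {x y : A}, x ∈ 𝒜 l → y ∈ 𝒜 m → x * y ∈ 𝒜 (l + m))
    (hfine : ∀ l, finrank F (𝒜 l) = 1)
    (hnz : ∀ {l m : Λ} {x y : A}, x ∈ 𝒜 l → y ∈ 𝒜 m → x ≠ 0 → y ≠ 0 → x * y ≠ 0)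
    {Λ' Λ'' : AddSubgroup Λ} (hcompl : IsCompl Λ' Λ'') :
    Function.Bijective
      (TensorProduct.lift
        (((LinearMap.mul F A).domRestrict (⨆ l ∈ Λ', 𝒜 l)).compl₂ (⨆ l ∈ Λ'', 𝒜 l).subtype)) := by
  set μ := TensorProduct.lift
    (((LinearMap.mul F A).domRestrict (⨆ l ∈ Λ', 𝒜 l)).compl₂ (⨆ l ∈ Λ'', 𝒜 l).subtype)
  obtain ⟨e, he, he0⟩ := exists_mem_ne_zero_of_finrank_eq_one hfine
  let b := (basisBiSupOfFinrankEqOne hfine hind he he0 Λ').tensorProduct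
    (basisBiSupOfFinrankEqOne hfine hind he he0 Λ'')
  have hμb : μ ∘ b = fun q => e q.1 * e q.2 := by
    funext ⟨l, m⟩
    simp [μ, b, Basis.tensorProduct_apply]
  have hmem (q : Λ' × Λ'') : e q.1 * e q.2 ∈ 𝒜 (q.1 + q.2) := hmul (he _) (he _)
  have hne (q : Λ' × Λ'') : e q.1 * e q.2 ≠ 0 := hnz (he _) (he _) (he0 _) (he0 _)
  have hadd := AddSubgroup.bijective_add_of_isCompl hcompl
  refine b.bijective_of_linearIndependent_of_span_eq_top ?_ ?_ <;> rw [hμb]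
  · exact (hind.comp hadd.injective).linearIndependent _ hmem hne
  · rw [span_range_eq_iSup_of_finrank_eq_one hfine hmem hne, hadd.surjective.iSup_comp, htop]

theorem stmt_10_general (F Λ A : Type*) [Field F] [AddCommGroup Λ] [DecidableEq Λ]
    [NonAssocRing A] [Module F A]
    [SMulCommClass F A A] [IsScalarTower F A A] [StarRing A]
    (𝒜 : Λ → Submodule F A) [DirectSum.Decomposition 𝒜]
    (hmul : ∀ {l m : Λ} {x y : A}, x ∈ 𝒜 l → y ∈ 𝒜 m → x * y ∈ 𝒜 (l + m))
    (hstar : ∀ {l : Λ} {x : A}, x ∈ 𝒜 l → star x ∈ 𝒜 l)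
    (hfine : ∀ l, Module.finrank F (𝒜 l) = 1)
    (hnz : ∀ {l m : Λ} {x y : A}, x ∈ 𝒜 l → y ∈ 𝒜 m → x ≠ 0 → y ≠ 0 → x * y ≠ 0)
    (Λ' Λ'' : AddSubgroup Λ) (hcompl : IsCompl Λ' Λ'')
    (hcomm : ∀ x y : A, x ∈ (⨆ l ∈ Λ', 𝒜 l) → y ∈ (⨆ l ∈ Λ'', 𝒜 l) → x * y = y * x)
    (hassoc1 : ∀ x y z : A, x ∈ (⨆ l ∈ Λ', 𝒜 l) → y ∈ (⨆ l ∈ Λ'', 𝒜 l) →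
      (x * y) * z = x * (y * z))
    (hassoc2 : ∀ x y z : A, y ∈ (⨆ l ∈ Λ', 𝒜 l) → z ∈ (⨆ l ∈ Λ'', 𝒜 l) →
      (x * y) * z = x * (y * z)) :
    Function.Bijective
      (TensorProduct.lift
        (((LinearMap.mul F A).domRestrict (⨆ l ∈ Λ', 𝒜 l)).compl₂
          (⨆ l ∈ Λ'', 𝒜 l).subtype)) ∧
    (∀ x₁ x₂ y₁ y₂ : A, x₁ ∈ (⨆ l ∈ Λ', 𝒜 l) → x₂ ∈ (⨆ l ∈ Λ', 𝒜 l) →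
      y₁ ∈ (⨆ l ∈ Λ'', 𝒜 l) → y₂ ∈ (⨆ l ∈ Λ'', 𝒜 l) →
      (x₁ * y₁) * (x₂ * y₂) = (x₁ * x₂) * (y₁ * y₂)) ∧
    (∀ x y : A, x ∈ (⨆ l ∈ Λ', 𝒜 l) → y ∈ (⨆ l ∈ Λ'', 𝒜 l) →
      star (x * y) = star x * star y) ∧
    (∀ (l m : Λ) (x y : A), l ∈ Λ' → m ∈ Λ'' → x ∈ 𝒜 l → y ∈ 𝒜 m →
      x * y ∈ 𝒜 (l + m)) := by
  have hInt := DirectSum.Decomposition.isInternal 𝒜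
  refine ⟨bijective_lift_mul_of_isCompl hInt.submodule_iSupIndep hInt.submodule_iSup_eq_top hmul
    hfine hnz hcompl, fun x₁ x₂ y₁ y₂ hx₁ hx₂ hy₁ hy₂ => ?_, fun x y hx hy => ?_,
    fun _ _ _ _ _ _ hx hy => hmul hx hy⟩
  · calc (x₁ * y₁) * (x₂ * y₂)
        = x₁ * (y₁ * (x₂ * y₂)) := hassoc1 _ _ _ hx₁ hy₁
      _ = x₁ * ((y₁ * x₂) * y₂) := by rw [hassoc2 _ _ _ hx₂ hy₂]
      _ = x₁ * ((x₂ * y₁) * y₂) := by rw [hcomm _ _ hx₂ hy₁]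
      _ = x₁ * (x₂ * (y₁ * y₂)) := by rw [hassoc1 _ _ _ hx₂ hy₁]
      _ = (x₁ * x₂) * (y₁ * y₂) := (hassoc2 _ _ _ hx₂ (mul_mem_biSup hmul hy₁ hy₂)).symm
  · rw [star_mul]
    exact (hcomm _ _ (star_mem_biSup hstar hx) (star_mem_biSup hstar hy)).symm

/-- Let `A` be a finely `Λ`-graded algebra with involution over a field `F`, with support
all of `Λ`, in which products of nonzero homogeneous elements are nonzero.  If
`Λ = Λ' ⊕ Λ''` with `[A^{Λ'}, A^{Λ''}] = 0` and
`(A^{Λ'}, A^{Λ''}, A) = (A, A^{Λ'}, A^{Λ''}) = 0`, then `x ⊗ y ↦ xy` is a graded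
isomorphism of algebras with involution from `A^{Λ'} ⊗_F A^{Λ''}` onto `A`:  it is
bijective, multiplicative (w.r.t. the tensor product multiplication), star-preserving and
graded. -/
theorem stmt_10 (F Λ A : Type*) [Field F] [AddCommGroup Λ] [DecidableEq Λ]
    [NonAssocRing A] [Module F A]
    [SMulCommClass F A A] [IsScalarTower F A A] [StarRing A]
    (hstarlin : ∀ (c : F) (a : A), star (c • a) = c • star a)
    (𝒜 : Λ → Submodule F A) [DirectSum.Decomposition 𝒜]
    (hone : (1 : A) ∈ 𝒜 0)
    (hmul : ∀ {l m : Λ} {x y : A}, x ∈ 𝒜 l → y ∈ 𝒜 m → x * y ∈ 𝒜 (l + m))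
    (hstar : ∀ {l : Λ} {x : A}, x ∈ 𝒜 l → star x ∈ 𝒜 l)
    (hfine : ∀ l, Module.finrank F (𝒜 l) = 1)
    (hnz : ∀ {l m : Λ} {x y : A}, x ∈ 𝒜 l → y ∈ 𝒜 m → x ≠ 0 → y ≠ 0 → x * y ≠ 0)
    (Λ' Λ'' : AddSubgroup Λ) (hcompl : IsCompl Λ' Λ'')
    (hcomm : ∀ x y : A, x ∈ (⨆ l ∈ Λ', 𝒜 l) → y ∈ (⨆ l ∈ Λ'', 𝒜 l) → x * y = y * x)
    (hassoc1 : ∀ x y z : A, x ∈ (⨆ l ∈ Λ', 𝒜 l) → y ∈ (⨆ l ∈ Λ'', 𝒜 l) →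
      (x * y) * z = x * (y * z))
    (hassoc2 : ∀ x y z : A, y ∈ (⨆ l ∈ Λ', 𝒜 l) → z ∈ (⨆ l ∈ Λ'', 𝒜 l) →
      (x * y) * z = x * (y * z)) :
    Function.Bijective
      (TensorProduct.lift
        (((LinearMap.mul F A).domRestrict (⨆ l ∈ Λ', 𝒜 l)).compl₂
          (⨆ l ∈ Λ'', 𝒜 l).subtype)) ∧
    (∀ x₁ x₂ y₁ y₂ : A, x₁ ∈ (⨆ l ∈ Λ', 𝒜 l) → x₂ ∈ (⨆ l ∈ Λ', 𝒜 l) →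
      y₁ ∈ (⨆ l ∈ Λ'', 𝒜 l) → y₂ ∈ (⨆ l ∈ Λ'', 𝒜 l) →
      (x₁ * y₁) * (x₂ * y₂) = (x₁ * x₂) * (y₁ * y₂)) ∧
    (∀ x y : A, x ∈ (⨆ l ∈ Λ', 𝒜 l) → y ∈ (⨆ l ∈ Λ'', 𝒜 l) →
      star (x * y) = star x * star y) ∧
    (∀ (l m : Λ) (x y : A), l ∈ Λ' → m ∈ Λ'' → x ∈ 𝒜 l → y ∈ 𝒜 m →
      x * y ∈ 𝒜 (l + m)) :=
  stmt_10_general F Λ A 𝒜 hmul hstar hfine hnz Λ' Λ'' hcompl hcomm hassoc1 hassoc2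
end

section
/- Let A be a structurable torus of class I (with associated maps ε: Λ → {±1} recording the sign of the involution on each homogeneous component, and β(λ₁,λ₂) ∈ F× defined by x₂x₁ = β(λ₁,λ₂)x₁x₂ for xᵢ ∈ A^{λᵢ}). Then β takes values in {±1}, and β(λ₁,λ₂) = β(λ₂,λ₁) = ε(λ₁)ε(λ₂)ε(λ₁+λ₂). -/
/-- For a class I structurable torus (a finely `Λ`-graded algebra with involution over a
field of characteristic `≠ 2, 3`, with support `Λ` and nonzero products of nonzero
homogeneous elements), the multiplicative commutator `β` takes values in `{±1}` and
`β(λ₁,λ₂) = β(λ₂,λ₁) = ε(λ₁)ε(λ₂)ε(λ₁+λ₂)`. -/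
theorem stmt_12 (F Λ A : Type*) [Field F] [AddCommGroup Λ] [DecidableEq Λ]
    [NonAssocRing A] [Module F A]
    [SMulCommClass F A A] [IsScalarTower F A A] [StarRing A]
    (hstarlin : ∀ (c : F) (a : A), star (c • a) = c • star a)
    (h2 : (2 : F) ≠ 0) (h3 : (3 : F) ≠ 0)
    (𝒜 : Λ → Submodule F A) [DirectSum.Decomposition 𝒜]
    (hone : (1 : A) ∈ 𝒜 0)
    (hmul : ∀ {l m : Λ} {x y : A}, x ∈ 𝒜 l → y ∈ 𝒜 m → x * y ∈ 𝒜 (l + m))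
    (hstar : ∀ {l : Λ} {x : A}, x ∈ 𝒜 l → star x ∈ 𝒜 l)
    (hfine : ∀ l, Module.finrank F (𝒜 l) = 1)
    (hnz : ∀ {l m : Λ} {x y : A}, x ∈ 𝒜 l → y ∈ 𝒜 m → x ≠ 0 → y ≠ 0 → x * y ≠ 0)
    (ε : Λ → F) (hε1 : ∀ l, ε l = 1 ∨ ε l = -1)
    (hεdef : ∀ (l : Λ) (x : A), x ∈ 𝒜 l → star x = ε l • x)
    (β : Λ → Λ → F)
    (hβ0 : ∀ l m, β l m ≠ 0)
    (hβdef : ∀ (l m : Λ) (x y : A), x ∈ 𝒜 l → y ∈ 𝒜 m → y * x = β l m • (x * y)) :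
    ∀ l m : Λ, (β l m = 1 ∨ β l m = -1) ∧ β l m = β m l ∧
      β l m = ε l * ε m * ε (l + m) := by
  -- a nonzero element in each component
  have hex : ∀ l : Λ, ∃ x : A, x ∈ 𝒜 l ∧ x ≠ 0 := by
    intro l
    have : Nontrivial (𝒜 l) := by
      apply Module.nontrivial_of_finrank_pos (R := F)
      rw [hfine]; norm_num
    obtain ⟨x, hx⟩ := exists_ne (0 : 𝒜 l)
    exact ⟨(x : A), x.2, fun h => hx (Subtype.ext h)⟩
  have hsq : ∀ t : Λ, ε t * ε t = 1 := by
    intro t; rcases hε1 t with h | h <;> rw [h] <;> ring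
  -- main computation
  have key : ∀ l m : Λ, β l m = ε l * ε m * ε (l + m) := by
    intro l m
    obtain ⟨x, hx, hx0⟩ := hex l
    obtain ⟨y, hy, hy0⟩ := hex m
    have hxy : x * y ≠ 0 := hnz hx hy hx0 hy0
    have h1 : star (x * y) = ε (l + m) • (x * y) := hεdef _ _ (hmul hx hy)
    have h2 : star (x * y) = (ε m * ε l * β l m) • (x * y) := by
      rw [star_mul, hεdef m y hy, hεdef l x hx, smul_mul_assoc, mul_smul_comm,
        hβdef l m x y hx hy, smul_smul, smul_smul]
    have h3 : ε (l + m) = ε m * ε l * β l m := by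
      have := h1.symm.trans h2
      have hsub : (ε (l + m) - (ε m * ε l * β l m)) • (x * y) = 0 := by
        rw [sub_smul, this, sub_self]
      rcases smul_eq_zero.mp hsub with h | h
      · exact sub_eq_zero.mp h
      · exact absurd h hxy
    have : ε l * ε m * ε (l + m) = ε l * ε m * (ε m * ε l * β l m) := by rw [h3]
    calc β l m = (ε l * ε l) * (ε m * ε m) * β l m := by rw [hsq, hsq]; ring
      _ = ε l * ε m * ε (l + m) := by rw [h3]; ring
  intro l m
  have hβsym : β l m = β m l := by rw [key, key, add_comm, mul_comm (ε l)]
  -- β l m * β m l = 1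
  obtain ⟨x, hx, hx0⟩ := hex l
  obtain ⟨y, hy, hy0⟩ := hex m
  have hxy : x * y ≠ 0 := hnz hx hy hx0 hy0
  have e1 : y * x = β l m • (x * y) := hβdef l m x y hx hy
  have e2 : x * y = β m l • (y * x) := hβdef m l y x hy hx
  have e3 : x * y = (β m l * β l m) • (x * y) := by
    calc x * y = β m l • (y * x) := e2
      _ = (β m l * β l m) • (x * y) := by rw [e1, smul_smul]
  have hunit : β m l * β l m = 1 := by
    have hsub : (β m l * β l m - 1) • (x * y) = 0 := by
      rw [sub_smul, one_smul, ← e3, sub_self]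
    rcases smul_eq_zero.mp hsub with h | h
    · exact sub_eq_zero.mp h
    · exact absurd h hxy
  have : β l m * β l m = 1 := by rw [hβsym] at hunit ⊢; exact hunit
  exact ⟨mul_self_eq_one_iff.mp this, hβsym, key l m⟩
end

section
/- Let C be a composition algebra over a commutative associative ring K (with nondegenerate norm n permitting composition and canonical involution x̄ = t(x)1 - x). If a, b, c ∈ C satisfy (ab)c = 1, then a(bc) = 1, (bc)a = 1, and (ca)b = 1. -/
/-- In a composition algebra `C` over a commutative associative ring `K` (a unital
`K`-algebra with a nondegenerate multiplicative quadratic form `n` with `n(1) = 1`):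
if `(ab)c = 1` then `a(bc) = 1`, `(bc)a = 1` and `(ca)b = 1`. -/
theorem stmt_15 (K C : Type*) [CommRing K] [NonAssocRing C] [Module K C]
    [SMulCommClass K C C] [IsScalarTower K C C]
    (n : QuadraticForm K C)
    (hnd : ∀ x : C, (∀ y : C, QuadraticMap.polar (⇑n) x y = 0) → x = 0)
    (h1 : n 1 = 1) (hcomp : ∀ x y : C, n (x * y) = n x * n y)
    (a b c : C) (h : (a * b) * c = 1) :
    a * (b * c) = 1 ∧ (b * c) * a = 1 ∧ (c * a) * b = 1 := by
  set p : C → C → K := fun x y => QuadraticMap.polar (⇑n) x y with hp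
  -- P1 : right multiplication
  have P1 : ∀ x y z : C, p (x*z) (y*z) = p x y * n z := by
    intro x y z
    simp only [hp, QuadraticMap.polar, ← add_mul, hcomp]
    ring
  have P1' : ∀ x y z : C, p (z*x) (z*y) = n z * p x y := by
    intro x y z
    simp only [hp, QuadraticMap.polar, ← mul_add, hcomp]
    ring
  have padd_l : ∀ x x' y : C, p (x + x') y = p x y + p x' y := fun x x' y =>
    QuadraticMap.polar_add_left n x x' y
  have padd_r : ∀ x y y' : C, p x (y + y') = p x y + p x y' := fun x y y' =>
    QuadraticMap.polar_add_right n x y y'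
  have psub_l : ∀ x x' y : C, p (x - x') y = p x y - p x' y := fun x x' y =>
    QuadraticMap.polar_sub_left n x x' y
  have psmul_l : ∀ (r : K) (x y : C), p (r • x) y = r * p x y := fun r x y => by
    simp only [hp]; rw [QuadraticMap.polar_smul_left]; rfl
  have pcomm : ∀ x y : C, p x y = p y x := fun x y => QuadraticMap.polar_comm (⇑n) x y
  -- P2 : full linearization
  have P2 : ∀ x y z w : C, p (x*z) (y*w) + p (x*w) (y*z) = p x y * p z w := by
    intro x y z w
    have e := P1 x y (z + w)
    simp only [mul_add, padd_l, padd_r] at e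
    have hzw : (p z w : K) = n (z + w) - n z - n w := rfl
    rw [P1 x y z, P1 x y w] at e
    have : p x y * n (z + w) = p x y * (n z + n w + p z w) := by rw [hzw]; ring
    rw [this] at e
    linear_combination e
  -- adjoint-style identities
  have A1 : ∀ u v w : C, p (u*v) w + p u (w*v) = p u w * p v 1 := by
    intro u v w
    have := P2 u w v 1
    simpa [mul_one] using this
  have A2 : ∀ u v w : C, p (u*v) w + p (u*w) v = p u 1 * p v w := by
    intro u v w
    have := P2 u 1 v w
    simpa [one_mul] using this
  -- key left/right alternative-type identities
  have L1 : ∀ x y : C, x * (x * y) = p x 1 • (x * y) - n x • y := by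
    intro x y
    have main : ∀ z : C, p (x * (x * y) - (p x 1 • (x * y) - n x • y)) z = 0 := by
      intro z
      have e1 := A2 x (x*y) z
      have e2 := P1' z y x
      have e3 := pcomm z y
      rw [psub_l, psub_l, psmul_l, psmul_l]
      linear_combination e1 - e2 - n x * e3
    have := hnd _ main
    rw [sub_eq_zero] at this
    exact this
  have L2 : ∀ x y : C, (y * x) * x = p x 1 • (y * x) - n x • y := by
    intro x y
    have main : ∀ z : C, p ((y * x) * x - (p x 1 • (y * x) - n x • y)) z = 0 := by
      intro z
      have e1 := A1 (y*x) x z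
      have e2 := P1 y z x
      rw [psub_l, psub_l, psmul_l, psmul_l]
      linear_combination e1 - e2
    have := hnd _ main
    rw [sub_eq_zero] at this
    exact this
  -- norms are "invertible": n a * n b * n c = 1
  have huvw : n a * n b * n c = 1 := by
    have := hcomp (a*b) c
    rw [h, hcomp a b, h1] at this
    linear_combination - this
  have cancel : ∀ (r s : K), s * r = 1 → ∀ x y : C, r • x = r • y → x = y := by
    intro r s hs x y hxy
    have h2 : s • r • x = s • r • y := by rw [hxy]
    rwa [smul_smul, smul_smul, hs, one_smul, one_smul] at h2
  -- E1 : n c • (a*b) = c̄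
  have E1 : n c • (a*b) = p c 1 • (1:C) - c := by
    have := L2 c (a*b)
    rw [h, one_mul] at this
    rw [eq_sub_iff_add_eq] at this ⊢
    rw [add_comm]
    exact this
  -- ā (a b) = n a • b
  have I1 : (p a 1 • (1:C) - a) * (a*b) = n a • b := by
    rw [sub_mul, smul_mul_assoc, one_mul, L1 a b, sub_sub_cancel]
  -- (y c̄) c = n c • y
  have I3 : ∀ y : C, (y * (p c 1 • (1:C) - c)) * c = n c • y := by
    intro y
    rw [mul_sub, mul_smul_comm, mul_one, sub_mul, smul_mul_assoc, L2 c y, sub_sub_cancel]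
  -- E2 : n a • (b*c) = ā
  have E2 : n a • (b*c) = p a 1 • (1:C) - a := by
    have step : (n c * n a) • (b*c) = n c • (p a 1 • (1:C) - a) := by
      have e : (p a 1 • (1:C) - a) * (n c • (a*b)) = n c • (n a • b) := by
        rw [mul_smul_comm, I1]
      rw [E1] at e
      have e2 := congrArg (· * c) e
      simp only [smul_mul_assoc] at e2
      rw [I3] at e2
      rw [smul_smul] at e2
      exact e2.symm
    have step' : n c • (n a • (b*c)) = n c • (p a 1 • (1:C) - a) := by
      rw [smul_smul]; exact step
    exact cancel (n c) (n a * n b) (by linear_combination huvw) _ _ step'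
  -- a·ā = n a • 1 and ā·a = n a • 1
  have I5a : a * (p a 1 • (1:C) - a) = n a • (1:C) := by
    rw [mul_sub, mul_smul_comm, mul_one]
    have e := L1 a 1
    rw [mul_one] at e
    rw [e, sub_sub_cancel]
  have I5b : (p a 1 • (1:C) - a) * a = n a • (1:C) := by
    rw [sub_mul, smul_mul_assoc, one_mul]
    have e := L2 a 1
    rw [one_mul] at e
    rw [e, sub_sub_cancel]
  have I5c : (p b 1 • (1:C) - b) * b = n b • (1:C) := by
    rw [sub_mul, smul_mul_assoc, one_mul]
    have e := L2 b 1
    rw [one_mul] at e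
    rw [e, sub_sub_cancel]
  -- goal 1
  have g1 : n a • (a*(b*c)) = n a • (1:C) := by
    rw [← mul_smul_comm, E2, I5a]
  have goal1 : a * (b*c) = 1 := cancel (n a) (n b * n c) (by linear_combination huvw) _ _ g1
  -- goal 2
  have g2 : n a • ((b*c)*a) = n a • (1:C) := by
    rw [← smul_mul_assoc, E2, I5b]
  have goal2 : (b*c) * a = 1 := cancel (n a) (n b * n c) (by linear_combination huvw) _ _ g2
  -- goal 3 : first E3 : n b • (c*a) = b̄
  have I2b : (a*b) * (p b 1 • (1:C) - b) = n b • a := by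
    rw [mul_sub, mul_smul_comm, mul_one, L2 b a, sub_sub_cancel]
  have I4c : ∀ y : C, c * ((p c 1 • (1:C) - c) * y) = n c • y := by
    intro y
    rw [sub_mul, smul_mul_assoc, one_mul, mul_sub, mul_smul_comm, L1 c y, sub_sub_cancel]
  have E3 : n b • (c*a) = p b 1 • (1:C) - b := by
    have e : (n c • (a*b)) * (p b 1 • (1:C) - b) = n c • (n b • a) := by
      rw [smul_mul_assoc, I2b]
    rw [E1] at e
    have e2 : c * ((p c 1 • (1:C) - c) * (p b 1 • (1:C) - b)) = c * (n c • n b • a) := by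
      rw [e]
    rw [I4c, mul_smul_comm, mul_smul_comm] at e2
    have step : n c • (n b • (c*a)) = n c • (p b 1 • (1:C) - b) := by
      rw [← e2]
    exact cancel (n c) (n a * n b) (by linear_combination huvw) _ _ step
  have g3 : n b • ((c*a)*b) = n b • (1:C) := by
    rw [← smul_mul_assoc, E3, I5c]
  have goal3 : (c*a) * b = 1 := cancel (n b) (n a * n c) (by linear_combination huvw) _ _ g3
  exact ⟨goal1, goal2, goal3⟩
end

section
/- Let J be a finite-dimensional central simple Jordan algebra over a field F of characteristic ≠ 2. If x ∈ J satisfies x² ∈ F·1 and the left multiplication operator L_x is invertible, then x ∈ F·1. -/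
/-- In a finite-dimensional central simple Jordan algebra `J` over a field `F` of
characteristic `≠ 2`:  if `x² ∈ F·1` and the left multiplication `L_x` is invertible,
then `x ∈ F·1`. -/
theorem stmt_16 (F J : Type*) [Field F] [NonAssocRing J] [Module F J]
    [SMulCommClass F J J] [IsScalarTower F J J] [FiniteDimensional F J] [Nontrivial J]
    (hchar : (2 : F) ≠ 0)
    (hcomm : ∀ a b : J, a * b = b * a)
    (hjordan : ∀ a b : J, ((a * a) * b) * a = (a * a) * (b * a))
    (hsimple : ∀ I : Submodule F J, (∀ (a : J), ∀ x ∈ I, a * x ∈ I) → I = ⊥ ∨ I = ⊤)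
    (hcentral : ∀ T : CentroidHom J, ∃ c : F, ∀ x, T x = c • x)
    (x : J) (hx2 : ∃ c : F, x * x = c • (1 : J))
    (hLx : Function.Bijective (fun y : J => x * y)) :
    ∃ c : F, x = c • (1 : J) := by
  obtain ⟨c, hc⟩ := hx2
  have hcy : ∀ y : J, (x * x) * y = c • y := fun y => by
    rw [hc, smul_mul_assoc, one_mul]
  -- key: L_x commutes with L_{x*z}
  have key : ∀ z y : J, ((x*z)*y)*x = (x*z)*(y*x) := by
    intro z y
    have h1 := hjordan (x+z) y
    have h2 := hjordan (x-z) y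
    have h3 := hjordan z y
    have h4 : (((x+z)*(x+z))*y)*(x+z) + (((x-z)*(x-z))*(y*(x-z)))
        = ((x+z)*(x+z))*(y*(x+z)) + ((((x-z)*(x-z))*y)*(x-z)) := by
      rw [h1, h2]
    simp only [mul_add, add_mul, mul_sub, sub_mul] at h4
    -- rewrite z*x into x*z everywhere
    rw [hcomm z x] at h4
    simp only [hcy, smul_mul_assoc, h3] at h4
    have h5 : (4:ℤ) • (x*z*y*x - x*z*(y*x)) = 0 := by
      rw [← sub_eq_zero] at h4
      rw [← h4]
      abel
    have h6 : ((4:ℤ):F) • (x*z*y*x - x*z*(y*x)) = 0 := by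
      rw [Int.cast_smul_eq_zsmul, h5]
    have h7 : ((4:ℤ):F) ≠ 0 := by
      have : ((4:ℤ):F) = 2 * 2 := by norm_num
      rw [this]; exact mul_ne_zero hchar hchar
    have := (smul_eq_zero.mp h6).resolve_left h7
    exact sub_eq_zero.mp this
  -- L_x commutes with every L_w, since L_x is surjective
  have commAll : ∀ w y : J, x * (w * y) = w * (x * y) := by
    intro w y
    obtain ⟨z, hz⟩ := hLx.2 w
    simp only at hz
    subst hz
    calc x * (x * z * y) = (x * z * y) * x := hcomm _ _
      _ = x * z * (y * x) := key z y
      _ = x * z * (x * y) := by rw [hcomm y x]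
  -- hence L_x is a centroid homomorphism
  let T : CentroidHom J :=
    { toFun := fun y => x * y
      map_zero' := mul_zero x
      map_add' := mul_add x
      map_mul_left' := fun a b => commAll a b
      map_mul_right' := fun a b => by
        show x * (a * b) = (x * a) * b
        rw [hcomm a b, commAll b a, hcomm b (x * a)]
      }
  obtain ⟨d, hd⟩ := hcentral T
  refine ⟨d, ?_⟩
  have h1 := hd 1
  rw [show T 1 = x * 1 from rfl, mul_one] at h1
  exact h1
end

section
/- Let E be a commutative associative algebra with involution over a field of characteristic ≠ 2,3, W a left E-module, N a cubic form and h a nondegenerate hermitian form on W such that (h,N) has an adjoint. If E contains a skew element that is invertible in E, then the centre of the algebra with involution A(h,N) = E ⊕ W equals E₊ = {a ∈ E : a* = a}. -/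
/-- The product of the algebra `A(h,N) = E ⊕ W`:
`(a,v)(b,w) = (ab + h(v,w), aw + b*v + v ◇ w)`, with `◇` the linearization of the
adjoint `♮`. -/
def stmt18Mul {E W : Type*} [CommRing E] [StarRing E] [AddCommGroup W] [Module E W]
    (h : W → W → E) (adj : W → W) (p q : E × W) : E × W :=
  (p.1 * q.1 + h p.2 q.2,
    p.1 • q.2 + star q.1 • p.2 + (adj (p.2 + q.2) - adj p.2 - adj q.2))

/-- Let `E` be a commutative associative algebra with involution over a field of
characteristic `≠ 2, 3`, `W` a left `E`-module with a nondegenerate hermitian form `h`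
and a cubic form `N` (full linearization `f`) such that `(h,N)` has an adjoint.  If `E`
contains a skew element invertible in `E`, then the centre of the algebra with
involution `A(h,N) = E ⊕ W` is exactly `E₊ = {a ∈ E : a* = a}`:  an element `z` is
hermitian, commutes with everything and associates with everything iff `z = (a,0)` with
`a* = a`. -/
theorem stmt_18 (F E W : Type*) [Field F] [CommRing E] [Algebra F E] [StarRing E]
    [AddCommGroup W] [Module E W] [Module F W] [IsScalarTower F E W]
    (hstarlin : ∀ (c : F) (a : E), star (c • a) = c • star a)
    (hchar2 : (2 : F) ≠ 0) (hchar3 : (3 : F) ≠ 0)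
    (h : W → W → E)
    (hadd1 : ∀ u v w : W, h (u + v) w = h u w + h v w)
    (hadd2 : ∀ u v w : W, h u (v + w) = h u v + h u w)
    (hsmul : ∀ (a : E) (u v : W), h (a • u) v = a * h u v)
    (hherm : ∀ u v : W, h v u = star (h u v))
    (hnd : ∀ u : W, (∀ w : W, h w u = 0) → u = 0)
    (f : W → W → W → E)
    (hfsymm₁ : ∀ u v w : W, f u v w = f v u w)
    (hfsymm₂ : ∀ u v w : W, f u v w = f u w v)
    (hfadd : ∀ u u' v w : W, f (u + u') v w = f u v w + f u' v w)
    (hfsmul : ∀ (a : E) (u v w : W), f (a • u) v w = a * f u v w)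
    (N : W → E)
    (hN : ∀ v : W, (3 : F) • N v = f v v v)
    (adj : W → W)
    (hadj : ∀ u v : W, (2 : F) • h u (adj v) = f u v v)
    (hskew : ∃ s : E, star s = -s ∧ IsUnit s) :
    ∀ z : E × W,
      ((star z.1, z.2) = z ∧
        (∀ p : E × W, stmt18Mul h adj z p = stmt18Mul h adj p z) ∧
        (∀ p q : E × W,
          stmt18Mul h adj (stmt18Mul h adj z p) q =
            stmt18Mul h adj z (stmt18Mul h adj p q)) ∧
        (∀ p q : E × W,
          stmt18Mul h adj (stmt18Mul h adj p z) q =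
            stmt18Mul h adj p (stmt18Mul h adj z q)) ∧
        (∀ p q : E × W,
          stmt18Mul h adj (stmt18Mul h adj p q) z =
            stmt18Mul h adj p (stmt18Mul h adj q z)))
      ↔ (star z.1 = z.1 ∧ z.2 = 0) := by

  intro z
  -- cancellation of the field scalar 2
  have c2E : ∀ x : E, (2 : F) • x = 0 → x = 0 := by
    intro x hx
    have := congrArg (fun y => (2 : F)⁻¹ • y) hx
    simpa [inv_smul_smul₀ hchar2] using this
  have c2W : ∀ x : W, (2 : F) • x = 0 → x = 0 := by
    intro x hx
    have := congrArg (fun y => (2 : F)⁻¹ • y) hx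
    simpa [inv_smul_smul₀ hchar2] using this
  have c2E' : ∀ x y : E, (2 : F) • x = (2 : F) • y → x = y := by
    intro x y hxy
    have h0 : (2 : F) • (x - y) = 0 := by rw [smul_sub, hxy, sub_self]
    exact sub_eq_zero.mp (c2E _ h0)
  -- basic facts about f
  have f0 : ∀ u w : W, f 0 u w = 0 := by
    intro u w
    have := hfsmul 0 0 u w
    simpa using this
  have f2add : ∀ u v v' w : W, f u (v + v') w = f u v w + f u v' w := by
    intro u v v' w
    rw [hfsymm₁, hfadd, hfsymm₁ v u w, hfsymm₁ v' u w]
  have f2smul : ∀ (a : E) (u v w : W), f u (a • v) w = a * f u v w := by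
    intro a u v w
    rw [hfsymm₁, hfsmul, hfsymm₁]
  -- basic facts about h
  have h0l : ∀ w : W, h 0 w = 0 := by
    intro w
    have := hsmul 0 0 w
    simpa using this
  have h0r : ∀ w : W, h w 0 = 0 := by
    intro w
    rw [hherm, h0l, star_zero]
  have hsub2 : ∀ (u v w : W), h u (v - w) = h u v - h u w := by
    intro u v w
    have hneg : h u (-w) = -h u w := by
      have := hadd2 u w (-w)
      rw [add_neg_cancel, h0r] at this
      exact eq_neg_of_add_eq_zero_right this.symm
    rw [sub_eq_add_neg, hadd2, hneg, sub_eq_add_neg]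
  have hsmul2 : ∀ (a : E) (u v : W), h u (a • v) = star a * h u v := by
    intro a u v
    rw [hherm (a • v) u, hsmul, star_mul, ← hherm v u]
    exact mul_comm _ _
  -- adj 0 = 0
  have adj0 : adj 0 = 0 := by
    apply hnd
    intro w
    apply c2E
    rw [hadj w 0, hfsymm₁, f0]
  -- the key pairing identity:  h u (v ◇ x) = f u v x
  have key : ∀ u v x : W, h u (adj (v + x) - adj v - adj x) = f u v x := by
    intro u v x
    apply c2E'
    rw [hsub2, hsub2, smul_sub, smul_sub, hadj u (v + x), hadj u v, hadj u x]
    have e1 : f u (v + x) (v + x) = f u v v + f u x x + (f u v x + f u v x) := by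
      rw [f2add, hfsymm₂ u v (v + x), hfsymm₂ u x (v + x), f2add, f2add,
        hfsymm₂ u v x, hfsymm₂ u x v]
      ring
    rw [e1, two_smul]
    ring
  -- equality test via nondegeneracy
  have Weq : ∀ y₁ y₂ : W, (∀ u : W, h u y₁ = h u y₂) → y₁ = y₂ := by
    intro y₁ y₂ hy
    have : ∀ u : W, h u (y₁ - y₂) = 0 := by
      intro u; rw [hsub2, hy, sub_self]
    exact sub_eq_zero.mp (hnd _ this)
  -- homogeneity of the linearized adjoint
  have Dsmul : ∀ (a : E), star a = a → ∀ w x : W,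
      adj (a • w + x) - adj (a • w) - adj x
        = a • (adj (w + x) - adj w - adj x) := by
    intro a ha w x
    apply Weq
    intro u
    rw [key u (a • w) x, hsmul2, ha, key u w x, f2smul]
  have Dsmul₂ : ∀ (a : E), star a = a → ∀ w x : W,
      adj (w + a • x) - adj w - adj (a • x)
        = a • (adj (w + x) - adj w - adj x) := by
    intro a ha w x
    apply Weq
    intro u
    rw [key u w (a • x), hsmul2, ha, key u w x, hfsymm₂, f2smul, hfsymm₂]
  -- multiplication by a hermitian scalar element
  have zmul : ∀ (b : E), star b = b → ∀ p : E × W,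
      stmt18Mul h adj (b, 0) p = (b * p.1, b • p.2) := by
    intro b hb p
    simp only [stmt18Mul]
    refine Prod.ext ?_ ?_
    · simp [h0l]
    · simp [adj0]
  have mulz : ∀ (b : E), star b = b → ∀ p : E × W,
      stmt18Mul h adj p (b, 0) = (p.1 * b, b • p.2) := by
    intro b hb p
    simp only [stmt18Mul]
    refine Prod.ext ?_ ?_
    · simp [h0r]
    · simp [adj0, hb]
  constructor
  · rintro ⟨hz1, hz2, -, -, -⟩
    have ha : star z.1 = z.1 := (Prod.ext_iff.mp hz1).1
    refine ⟨ha, ?_⟩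
    obtain ⟨s, hs, hsu⟩ := hskew
    have this0 := congrArg Prod.snd (hz2 (s, 0))
    simp only [stmt18Mul, smul_zero, zero_add, add_zero, adj0, hs, sub_self,
      sub_zero, zero_sub, neg_smul] at this0
    have h2 : (2 : F) • (s • z.2) = 0 := by
      rw [two_smul]
      nth_rewrite 1 [← this0]
      exact neg_add_cancel _
    have hsz : s • z.2 = 0 := c2W _ h2
    obtain ⟨us, rfl⟩ := hsu
    have : (↑us⁻¹ : E) • ((us : E) • z.2) = 0 := by rw [hsz, smul_zero]
    rwa [smul_smul, Units.inv_mul, one_smul] at this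
  · rintro ⟨ha, hu⟩
    have hz : z = (z.1, 0) := Prod.ext rfl hu
    set a := z.1 with ha'
    rw [hz]
    refine ⟨by rw [ha], ?_, ?_, ?_, ?_⟩
    · intro p
      rw [zmul a ha, mulz a ha, mul_comm]
    · intro p q
      rw [zmul a ha p, zmul a ha (stmt18Mul h adj p q)]
      simp only [stmt18Mul]
      refine Prod.ext ?_ ?_
      · simp only
        rw [hsmul]
        ring
      · simp only
        rw [Dsmul a ha]
        module
    · intro p q
      rw [mulz a ha p, zmul a ha q]
      simp only [stmt18Mul]
      refine Prod.ext ?_ ?_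
      · simp only
        rw [hsmul, hsmul2, ha]
        ring
      · simp only
        rw [Dsmul a ha, Dsmul₂ a ha, star_mul, ha]
        module
    · intro p q
      rw [mulz a ha q, mulz a ha (stmt18Mul h adj p q)]
      simp only [stmt18Mul]
      refine Prod.ext ?_ ?_
      · simp only
        rw [hsmul2, ha]
        ring
      · simp only
        rw [Dsmul₂ a ha, star_mul, ha]
        module
end
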